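/- arXiv:2308.16614 — 2 statements merged into one kernel-verified Lean document; each statement's English description precedes it below -/
import Mathlib

section
/- Let x ∈ V(ℤ) and suppose the entire Γ-orbit of x is contained in V(ℤ)\𝔘. Then either every last vertex in the Γ-orbit of x belongs to 𝔗, or every last vertex in the Γ-orbit of x belongs to V(ℤ)\(𝔗 ∪ 𝔘). -/
/-!
Outside `𝔗` the height `Δ` behaves as on a tree. At a point of `V(ℤ) \ (𝔗 ∪ 𝔘)` at most one Vieta
move does not increase `Δ` (two such moves force the third coordinate to be `±2`, i.e. a point of
`𝔘`); a move keeping `Δ` fixed fixes the point (since `αᵢ ≠ xⱼxₗ`); and a move into `𝔗` strictly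
decreases `Δ`. So if `z ∉ 𝔗` is a last vertex, along any reduced word starting at `z` the height
first stays put and then, from the first strict ascent on, increases strictly without entering `𝔗`;
the endpoint is then not a last vertex. Hence `z` is the only last vertex of its orbit.
-/

/-- The Vieta involution in coordinate `i`:
`x ↦ Function.update x i (αᵢ − xⱼxₗ − xᵢ)` where `j = i+1`, `l = i+2` (mod 3). -/
def vAct (α : Fin 3 → ℤ) (i : Fin 3) (x : Fin 3 → ℤ) : Fin 3 → ℤ :=
  Function.update x i (α i - x (i + 1) * x (i + 2) - x i)

/-- Membership in the integral cubic surface `V(ℤ)`. -/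
def onV (α : Fin 3 → ℤ) (β : ℤ) (x : Fin 3 → ℤ) : Prop :=
  x 0 ^ 2 + x 1 ^ 2 + x 2 ^ 2 + x 0 * x 1 * x 2
    - α 0 * x 0 - α 1 * x 1 - α 2 * x 2 - β = 0

/-- The height function `Δ(x) = |x₁| + |x₂| + |x₃|`. -/
def delta (x : Fin 3 → ℤ) : ℤ := |x 0| + |x 1| + |x 2|

/-- Membership in the finite exceptional set `𝔗`. -/
def inT (α : Fin 3 → ℤ) (β : ℤ) (x : Fin 3 → ℤ) : Prop :=
  onV α β x ∧ ∃ σ : Equiv.Perm (Fin 3),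
    |x (σ 0)| ≤ 1 ∨ |x (σ 1) * x (σ 2)| ≤ max (3 * |α (σ 0)|) 4

/-- Membership in the exceptional set `𝔘`. -/
def inU (α : Fin 3 → ℤ) (β : ℤ) (x : Fin 3 → ℤ) : Prop :=
  onV α β x ∧ ¬ inT α β x ∧ ∃ σ : Equiv.Perm (Fin 3),
    |x (σ 0)| = 2 ∧ delta (vAct α (σ 1) x) ≤ delta x ∧
      delta (vAct α (σ 2) x) ≤ delta x

/-- `y` lies in the `Γ`-orbit of `x`: it is obtained from `x` by a finite
sequence of Vieta involutions. -/
def gammaRel (α : Fin 3 → ℤ) (x y : Fin 3 → ℤ) : Prop :=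
  ∃ L : List (Fin 3), y = L.foldl (fun z i => vAct α i z) x

/-- `y` lies in the `Γ₀`-orbit (mapping class group orbit) of `x`: it is
obtained from `x` by an even-length sequence of Vieta involutions. -/
def gamma0Rel (α : Fin 3 → ℤ) (x y : Fin 3 → ℤ) : Prop :=
  ∃ L : List (Fin 3), L.length % 2 = 0 ∧ y = L.foldl (fun z i => vAct α i z) x

/-- `y` is a descendent of `x`: obtained by a finite sequence of Vieta
involutions along which `Δ` is non-increasing at every step. -/
def descendent (α : Fin 3 → ℤ) (x y : Fin 3 → ℤ) : Prop :=
  ∃ L : List (Fin 3), y = L.foldl (fun z i => vAct α i z) x ∧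
    ∀ t < L.length,
      delta ((L.take (t + 1)).foldl (fun z i => vAct α i z) x) ≤
        delta ((L.take t).foldl (fun z i => vAct α i z) x)

/-- Membership in `𝔗' = {𝒱ᵢ(x), 𝒱ⱼ𝒱ᵢ(x) : x ∈ 𝔗}`. -/
def inT' (α : Fin 3 → ℤ) (β : ℤ) (x : Fin 3 → ℤ) : Prop :=
  ∃ y, inT α β y ∧
    ((∃ i, x = vAct α i y) ∨ ∃ i j, x = vAct α j (vAct α i y))

/-- Membership in `𝔘' = {𝒱ᵢ(x), 𝒱ⱼ𝒱ᵢ(x) : x ∈ 𝔘}`. -/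
def inU' (α : Fin 3 → ℤ) (β : ℤ) (x : Fin 3 → ℤ) : Prop :=
  ∃ y, inU α β y ∧
    ((∃ i, x = vAct α i y) ∨ ∃ i j, x = vAct α j (vAct α i y))


section

variable {α : Fin 3 → ℤ} {β : ℤ}

@[simp] lemma vAct_apply_self (i : Fin 3) (x : Fin 3 → ℤ) :
    vAct α i x i = α i - x (i + 1) * x (i + 2) - x i := by simp [vAct]

@[simp] lemma vAct_apply_add_one (i : Fin 3) (x : Fin 3 → ℤ) :
    vAct α i x (i + 1) = x (i + 1) := Function.update_of_ne (by simp) _ _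

@[simp] lemma vAct_apply_add_two (i : Fin 3) (x : Fin 3 → ℤ) :
    vAct α i x (i + 2) = x (i + 2) := Function.update_of_ne (by simp) _ _

@[simp] lemma vAct_vAct (i : Fin 3) (x : Fin 3 → ℤ) : vAct α i (vAct α i x) = x := by
  funext j
  rcases eq_or_ne j i with rfl | h
  · simp
  · simp [vAct, Function.update_of_ne h]

lemma delta_vAct (i : Fin 3) (x : Fin 3 → ℤ) :
    delta (vAct α i x) = delta x - |x i| + |α i - x (i + 1) * x (i + 2) - x i| := by
  fin_cases i <;> simp [delta, vAct] <;> ring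

lemma vAct_eq_self_of_delta_eq {i : Fin 3} {x : Fin 3 → ℤ} (h : α i ≠ x (i + 1) * x (i + 2))
    (hΔ : delta (vAct α i x) = delta x) : vAct α i x = x := by
  rw [delta_vAct] at hΔ
  have hfix : α i - x (i + 1) * x (i + 2) - x i = x i := by
    rcases abs_eq_abs.mp (by linarith : |α i - x (i + 1) * x (i + 2) - x i| = |x i|) with h' | h'
    · exact h'
    · exact absurd (by linarith) h
  rw [vAct, hfix, Function.update_eq_self]

-- The conditions defining `𝔗` are symmetric in `j, l`, so the cyclic rotations `(i, i+1, i+2)` of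
-- `(1, 2, 3)` already express them.
def IsLarge (α : Fin 3 → ℤ) (x : Fin 3 → ℤ) : Prop :=
  ∀ i : Fin 3, 2 ≤ |x i| ∧ max (3 * |α i|) 4 < |x (i + 1) * x (i + 2)|

lemma inT_iff_not_isLarge {x : Fin 3 → ℤ} (hx : onV α β x) : inT α β x ↔ ¬ IsLarge α x := by
  simp only [inT, hx, true_and, IsLarge, not_forall, not_and_or, not_le, not_lt]
  constructor
  · rintro ⟨σ, h⟩
    refine ⟨σ 0, ?_⟩
    have key : ∀ a b c : Fin 3, a ≠ b → a ≠ c → b ≠ c →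
        (b = a + 1 ∧ c = a + 2) ∨ (b = a + 2 ∧ c = a + 1) := by decide
    rcases key (σ 0) (σ 1) (σ 2) (by simp) (by simp) (by simp) with ⟨h1, h2⟩ | ⟨h1, h2⟩ <;>
      rw [h1, h2] at h
    · omega
    · rw [mul_comm] at h; omega
  · rintro ⟨i, h⟩
    exact ⟨Equiv.addLeft i, by simpa using h⟩

lemma abs_lt_three_of_abs_sub_mul_sub_le {a b c p q : ℤ} (hp : 3 * |p| < |c * a|)
    (hq : 3 * |q| < |a * b|) (hb : |p - c * a - b| ≤ |b|) (hc : |q - a * b - c| ≤ |c|) :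
    |a| < 3 := by
  have hca : |c * a| ≤ |p| + 2 * |b| :=
    calc |c * a| = |(p - b) - (p - c * a - b)| := by ring_nf
      _ ≤ |p - b| + |p - c * a - b| := abs_sub _ _
      _ ≤ |p| + |b| + |b| := by gcongr; exact abs_sub _ _
      _ = |p| + 2 * |b| := by ring
  have hab : |a * b| ≤ |q| + 2 * |c| :=
    calc |a * b| = |(q - c) - (q - a * b - c)| := by ring_nf
      _ ≤ |q - c| + |q - a * b - c| := abs_sub _ _
      _ ≤ |q| + |c| + |c| := by gcongr; exact abs_sub _ _
      _ = |q| + 2 * |c| := by ring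
  rw [abs_mul] at hp hq hca hab
  by_contra! ha
  nlinarith [abs_nonneg b, abs_nonneg c]

lemma abs_eq_two_of_delta_vAct_le {i : Fin 3} {x : Fin 3 → ℤ} (hx : IsLarge α x)
    (h₁ : delta (vAct α (i + 1) x) ≤ delta x) (h₂ : delta (vAct α (i + 2) x) ≤ delta x) :
    |x i| = 2 := by
  have hx₁ := (hx (i + 1)).2
  have hx₂ := (hx (i + 2)).2
  simp only [delta_vAct, add_assoc, Fin.isValue, Fin.reduceAdd, add_zero] at h₁ h₂ hx₁ hx₂
  have := abs_lt_three_of_abs_sub_mul_sub_le ((le_max_left _ _).trans_lt hx₁)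
    ((le_max_left _ _).trans_lt hx₂) (by linarith) (by linarith)
  have := (hx i).1
  omega

lemma isLarge_vAct_of_delta_le {i : Fin 3} {x : Fin 3 → ℤ} (hx : IsLarge α x)
    (h : delta x ≤ delta (vAct α i x)) : IsLarge α (vAct α i x) := by
  by_contra hy
  suffices |vAct α i x i| < |x i| by
    rw [delta_vAct] at h
    rw [vAct_apply_self] at this
    linarith
  obtain ⟨m, hm⟩ := not_forall.mp hy
  obtain ⟨k, rfl⟩ : ∃ k, m = i + k := ⟨m - i, by abel⟩
  have hxm := hx (i + k)
  fin_cases k <;>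
    simp only [Fin.zero_eta, Fin.mk_one, Fin.reduceFinMk, Fin.isValue, add_assoc, Fin.reduceAdd,
      add_zero, vAct_apply_self, vAct_apply_add_one, vAct_apply_add_two, abs_mul, sup_lt_iff,
      not_and, not_lt] at hm hxm ⊢
  · omega
  · by_contra! h
    have := mul_le_mul_of_nonneg_left h (abs_nonneg (x (i + 2)))
    omega
  · by_contra! h
    have := mul_le_mul_of_nonneg_right h (abs_nonneg (x (i + 1)))
    omega

lemma lt_delta_vAct_of_ne {i j : Fin 3} {x : Fin 3 → ℤ} (hV : onV α β x) (hx : IsLarge α x)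
    (hU : ¬ inU α β x) (hij : i ≠ j) (hj : delta (vAct α j x) ≤ delta x) :
    delta x < delta (vAct α i x) := by
  by_contra! hi
  obtain ⟨k, hk⟩ := (by decide : ∀ i j : Fin 3, i ≠ j →
    ∃ k, (i = k + 1 ∧ j = k + 2) ∨ (i = k + 2 ∧ j = k + 1)) i j hij
  have hT : ¬ inT α β x := fun h => (inT_iff_not_isLarge hV).mp h hx
  rcases hk with ⟨rfl, rfl⟩ | ⟨rfl, rfl⟩
  · exact hU ⟨hV, hT, Equiv.addLeft k,
      by simpa using ⟨abs_eq_two_of_delta_vAct_le hx hi hj, hi, hj⟩⟩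
  · exact hU ⟨hV, hT, Equiv.addLeft k,
      by simpa using ⟨abs_eq_two_of_delta_vAct_le hx hj hi, hj, hi⟩⟩

def vActWord (α : Fin 3 → ℤ) (L : List (Fin 3)) (x : Fin 3 → ℤ) : Fin 3 → ℤ :=
  L.foldl (fun z i => vAct α i z) x

def IsLastVertex (α : Fin 3 → ℤ) (y : Fin 3 → ℤ) : Prop :=
  ∀ i, delta y ≤ delta (vAct α i y)

lemma vActWord_reverse_vActWord (L : List (Fin 3)) (x : Fin 3 → ℤ) :
    vActWord α L.reverse (vActWord α L x) = x := by
  induction L generalizing x with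
  | nil => rfl
  | cons i L ih =>
    simp only [vActWord, List.reverse_cons, List.foldl_append, List.foldl_cons] at ih ⊢
    rw [ih, List.foldl_nil, vAct_vAct]

lemma gammaRel_refl (x : Fin 3 → ℤ) : gammaRel α x x := ⟨[], rfl⟩

lemma gammaRel_vAct (x : Fin 3 → ℤ) (i : Fin 3) : gammaRel α x (vAct α i x) := ⟨[i], rfl⟩

lemma gammaRel_trans {x y z : Fin 3 → ℤ} (hxy : gammaRel α x y) (hyz : gammaRel α y z) :
    gammaRel α x z := by
  obtain ⟨L₁, rfl⟩ := hxy
  obtain ⟨L₂, rfl⟩ := hyz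
  exact ⟨L₁ ++ L₂, (List.foldl_append ..).symm⟩

lemma gammaRel_symm {x y : Fin 3 → ℤ} (h : gammaRel α x y) : gammaRel α y x := by
  obtain ⟨L, rfl⟩ := h
  exact ⟨L.reverse, (vActWord_reverse_vActWord L x).symm⟩

lemma exists_isChain_vActWord_eq (L : List (Fin 3)) (x : Fin 3 → ℤ) :
    ∃ L' : List (Fin 3), L'.IsChain (· ≠ ·) ∧ vActWord α L' x = vActWord α L x := by
  induction L generalizing x with
  | nil => exact ⟨[], .nil, rfl⟩
  | cons i L ih =>
    obtain ⟨L', hL', hx⟩ := ih (vAct α i x)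
    rcases L' with _ | ⟨j, L'⟩
    · exact ⟨[i], .singleton i, hx⟩
    · by_cases hij : i = j
      · subst hij
        exact ⟨L', hL'.tail, by simpa [vActWord] using hx⟩
      · exact ⟨i :: j :: L', .cons_cons hij hL', hx⟩

lemma exists_delta_vAct_lt_of_isChain {q : Fin 3 → ℤ}
    (horb : ∀ y, gammaRel α q y → onV α β y ∧ ¬ inU α β y) (hq : IsLarge α q)
    {j : Fin 3} {L : List (Fin 3)} (hL : (j :: L).IsChain (· ≠ ·))
    (hj : delta (vAct α j q) < delta q) :
    ∃ i, delta (vAct α i (vActWord α L q)) < delta (vActWord α L q) := by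
  induction L generalizing q j with
  | nil => exact ⟨j, hj⟩
  | cons i L ih =>
    obtain ⟨hji, hL⟩ := List.isChain_cons_cons.mp hL
    obtain ⟨hqV, hqU⟩ := horb q (gammaRel_refl q)
    have hi : delta q < delta (vAct α i q) := lt_delta_vAct_of_ne hqV hq hqU (Ne.symm hji) hj.le
    exact ih (fun y hy => horb y (gammaRel_trans (gammaRel_vAct q i) hy))
      (isLarge_vAct_of_delta_le hq hi.le) hL (by rwa [vAct_vAct])

lemma vActWord_eq_self_of_isLastVertex {z : Fin 3 → ℤ}
    (horb : ∀ y, gammaRel α z y → onV α β y ∧ ¬ inU α β y) (hz : IsLarge α z)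
    (hzlast : IsLastVertex α z) {L : List (Fin 3)} (hL : L.IsChain (· ≠ ·))
    (hlast : IsLastVertex α (vActWord α L z)) : vActWord α L z = z := by
  induction L with
  | nil => rfl
  | cons j L ih =>
    rcases (hzlast j).lt_or_eq with hlt | heq
    · obtain ⟨i, hi⟩ := exists_delta_vAct_lt_of_isChain
        (fun y hy => horb y (gammaRel_trans (gammaRel_vAct z j) hy))
        (isLarge_vAct_of_delta_le hz hlt.le) hL (by rwa [vAct_vAct])
      exact absurd (hlast i) hi.not_ge
    · have hne : α j ≠ z (j + 1) * z (j + 2) := by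
        intro h
        have := (hz j).2
        rw [← h] at this
        omega
      have hfix : vAct α j z = z := vAct_eq_self_of_delta_eq hne heq.symm
      simp only [vActWord, List.foldl_cons, hfix] at hlast ⊢
      exact ih hL.tail hlast

lemma eq_of_gammaRel_of_isLastVertex {z w : Fin 3 → ℤ}
    (horb : ∀ y, gammaRel α z y → onV α β y ∧ ¬ inU α β y) (hz : IsLarge α z)
    (hzlast : IsLastVertex α z) (hw : gammaRel α z w) (hwlast : IsLastVertex α w) : w = z := by
  obtain ⟨L, rfl⟩ := hw
  obtain ⟨L', hL', hL'eq⟩ := exists_isChain_vActWord_eq (α := α) L z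
  rw [← vActWord, ← hL'eq] at hwlast ⊢
  exact vActWord_eq_self_of_isLastVertex horb hz hzlast hL' hwlast

end

theorem cor_2_5_dichotomy_general (α : Fin 3 → ℤ) (β : ℤ) (x : Fin 3 → ℤ)
    (horb : ∀ y, gammaRel α x y → onV α β y ∧ ¬ inU α β y) :
    (∀ y, gammaRel α x y → (∀ i : Fin 3, delta y ≤ delta (vAct α i y)) →
      inT α β y) ∨
    (∀ y, gammaRel α x y → (∀ i : Fin 3, delta y ≤ delta (vAct α i y)) →
      onV α β y ∧ ¬ inT α β y ∧ ¬ inU α β y) := by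
  by_cases hT : ∀ y, gammaRel α x y → (∀ i : Fin 3, delta y ≤ delta (vAct α i y)) → inT α β y
  · exact Or.inl hT
  push Not at hT
  obtain ⟨z, hxz, hzlast, hzT⟩ := hT
  have hzorb : ∀ y, gammaRel α z y → onV α β y ∧ ¬ inU α β y :=
    fun y hy => horb y (gammaRel_trans hxz hy)
  have hz : IsLarge α z :=
    not_not.mp (mt (inT_iff_not_isLarge (hzorb z (gammaRel_refl z)).1).mpr hzT)
  refine Or.inr fun w hxw hwlast => ?_
  obtain rfl : w = z :=
    eq_of_gammaRel_of_isLastVertex hzorb hz hzlast (gammaRel_trans (gammaRel_symm hxz) hxw) hwlast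
  exact ⟨(horb w hxw).1, hzT, (horb w hxw).2⟩

/-- If the `Γ`-orbit of `x` avoids `𝔘`, then either all last vertices of the
orbit are in `𝔗`, or all are in `V(ℤ) \ (𝔗 ∪ 𝔘)`. -/
theorem cor_2_5_dichotomy (α : Fin 3 → ℤ) (β : ℤ) (x : Fin 3 → ℤ)
    (hx : onV α β x)
    (horb : ∀ y, gammaRel α x y → onV α β y ∧ ¬ inU α β y) :
    (∀ y, gammaRel α x y → (∀ i : Fin 3, delta y ≤ delta (vAct α i y)) →
      inT α β y) ∨
    (∀ y, gammaRel α x y → (∀ i : Fin 3, delta y ≤ delta (vAct α i y)) →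
      onV α β y ∧ ¬ inT α β y ∧ ¬ inU α β y) :=
  cor_2_5_dichotomy_general α β x horb
end

section
/- Let x, y ∈ 𝔘 be Γ-equivalent. Then for any path z₁ = x, z₂, …, z_N = y (a sequence of pairwise distinct points with z_{t+1} = 𝒱_{l_t}(z_t) for some l_t ∈ {1,2,3} at each step), every vertex z_t on the path satisfies either z_t ∈ 𝔗 or |π_i(z_t)| = 2 for some coordinate i ∈ {1,2,3}. -/
lemma add_one_ne (i : Fin 3) : i + 1 ≠ i := by fin_cases i <;> decide
lemma add_two_ne (i : Fin 3) : i + 2 ≠ i := by fin_cases i <;> decide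

lemma vAct_self (α : Fin 3 → ℤ) (i : Fin 3) (x : Fin 3 → ℤ) :
    vAct α i x i = α i - x (i + 1) * x (i + 2) - x i := Function.update_self _ _ _

lemma vAct_ne (α : Fin 3 → ℤ) (i k : Fin 3) (x : Fin 3 → ℤ) (h : k ≠ i) :
    vAct α i x k = x k := Function.update_of_ne h _ _

lemma vAct_invol (α : Fin 3 → ℤ) (i : Fin 3) (x : Fin 3 → ℤ) :
    vAct α i (vAct α i x) = x := by
  funext k
  by_cases hk : k = i
  · subst hk
    rw [vAct_self, vAct_ne _ _ _ _ (add_one_ne k), vAct_ne _ _ _ _ (add_two_ne k), vAct_self]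
    ring
  · rw [vAct_ne _ _ _ _ hk, vAct_ne _ _ _ _ hk]

lemma vAct_coords0 (α : Fin 3 → ℤ) (x : Fin 3 → ℤ) :
    vAct α 0 x 0 = α 0 - x 1 * x 2 - x 0 ∧ vAct α 0 x 1 = x 1 ∧ vAct α 0 x 2 = x 2 := by
  refine ⟨?_, ?_, ?_⟩ <;> simp [vAct, Function.update_apply, Fin.ext_iff]

lemma vAct_coords1 (α : Fin 3 → ℤ) (x : Fin 3 → ℤ) :
    vAct α 1 x 1 = α 1 - x 2 * x 0 - x 1 ∧ vAct α 1 x 0 = x 0 ∧ vAct α 1 x 2 = x 2 := by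
  refine ⟨?_, ?_, ?_⟩ <;> simp [vAct, Function.update_apply, Fin.ext_iff]

lemma vAct_coords2 (α : Fin 3 → ℤ) (x : Fin 3 → ℤ) :
    vAct α 2 x 2 = α 2 - x 0 * x 1 - x 2 ∧ vAct α 2 x 0 = x 0 ∧ vAct α 2 x 1 = x 1 := by
  refine ⟨?_, ?_, ?_⟩ <;> simp [vAct, Function.update_apply, Fin.ext_iff]

lemma onV_vAct {α : Fin 3 → ℤ} {β : ℤ} {x : Fin 3 → ℤ} (h : onV α β x) (i : Fin 3) :
    onV α β (vAct α i x) := by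
  fin_cases i
  · obtain ⟨e0, e1, e2⟩ := vAct_coords0 α x
    unfold onV at h ⊢
    rw [show (⟨0, by norm_num⟩ : Fin 3) = 0 from rfl, e0, e1, e2]
    linear_combination h
  · obtain ⟨e1, e0, e2⟩ := vAct_coords1 α x
    unfold onV at h ⊢
    rw [show (⟨1, by norm_num⟩ : Fin 3) = 1 from rfl, e0, e1, e2]
    linear_combination h
  · obtain ⟨e2, e0, e1⟩ := vAct_coords2 α x
    unfold onV at h ⊢
    rw [show (⟨2, by norm_num⟩ : Fin 3) = 2 from rfl, e0, e1, e2]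
    linear_combination h

lemma keyABC (A B C : ℤ) (h : |A - B - C| ≤ |C|) (h2 : 3 * |A| < |B|) : |B| < 3 * |C| := by
  have h1 : |B| ≤ |A| + 2 * |C| := by
    rcases abs_le.mp h with ⟨u, v⟩
    rw [abs_le]
    constructor <;> nlinarith [le_abs_self A, neg_abs_le A, le_abs_self C, neg_abs_le C,
      le_abs_self B, neg_abs_le B]
  linarith

lemma notT_bounds {α : Fin 3 → ℤ} {β : ℤ} {w : Fin 3 → ℤ} (hV : onV α β w)
    (hnT : ¬ inT α β w) (i : Fin 3) :
    2 ≤ |w i| ∧ max (3 * |α i|) 4 < |w (i + 1) * w (i + 2)| := by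
  have hne : ∀ σ : Equiv.Perm (Fin 3),
      ¬(|w (σ 0)| ≤ 1 ∨ |w (σ 1) * w (σ 2)| ≤ max (3 * |α (σ 0)|) 4) := by
    intro σ hσ; exact hnT ⟨hV, σ, hσ⟩
  have h := hne (Equiv.addRight i)
  push_neg at h
  simp only [Equiv.coe_addRight, zero_add] at h
  rw [add_comm 1 i, add_comm 2 i] at h
  exact ⟨by omega, h.2⟩

lemma tri (a b c : ℤ) (ha : 3 ≤ a) (hb : 3 ≤ b) (hc : 3 ≤ c)
    (h1 : b * c < 3 * a) (h2 : c * a < 3 * b) : False := by nlinarith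

lemma no_two_down {α : Fin 3 → ℤ} (w : Fin 3 → ℤ)
    (h3 : ∀ i, 3 ≤ |w i|)
    (hα : ∀ i, 3 * |α i| < |w (i + 1) * w (i + 2)|)
    (j l : Fin 3) (hjl : j ≠ l)
    (hj : |vAct α j w j| ≤ |w j|) (hl : |vAct α l w l| ≤ |w l|) : False := by
  have key : ∀ m : Fin 3, |vAct α m w m| ≤ |w m| →
      |w (m + 1)| * |w (m + 2)| < 3 * |w m| := by
    intro m hm
    rw [vAct_self] at hm
    have := keyABC (α m) (w (m + 1) * w (m + 2)) (w m) hm (hα m)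
    rwa [abs_mul] at this
  have K0 : |vAct α 0 w 0| ≤ |w 0| → |w 1| * |w 2| < 3 * |w 0| := fun h => by
    have := key 0 h
    rwa [show ((0 : Fin 3) + 1) = 1 from rfl, show ((0 : Fin 3) + 2) = 2 from rfl] at this
  have K1 : |vAct α 1 w 1| ≤ |w 1| → |w 2| * |w 0| < 3 * |w 1| := fun h => by
    have := key 1 h
    rwa [show ((1 : Fin 3) + 1) = 2 from rfl, show ((1 : Fin 3) + 2) = 0 from rfl] at this
  have K2 : |vAct α 2 w 2| ≤ |w 2| → |w 0| * |w 1| < 3 * |w 2| := fun h => by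
    have := key 2 h
    rwa [show ((2 : Fin 3) + 1) = 0 from rfl, show ((2 : Fin 3) + 2) = 1 from rfl] at this
  have t0 := h3 0; have t1 := h3 1; have t2 := h3 2
  fin_cases j <;> fin_cases l
  · exact absurd rfl hjl
  · exact tri _ _ _ t0 t1 t2 (K0 hj) (K1 hl)
  · exact tri _ _ _ t2 t0 t1 (K2 hl) (K0 hj)
  · exact tri _ _ _ t0 t1 t2 (K0 hl) (K1 hj)
  · exact absurd rfl hjl
  · exact tri _ _ _ t1 t2 t0 (K1 hj) (K2 hl)
  · exact tri _ _ _ t2 t0 t1 (K2 hj) (K0 hl)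
  · exact tri _ _ _ t1 t2 t0 (K1 hl) (K2 hj)
  · exact absurd rfl hjl

lemma inT_of_small {α : Fin 3 → ℤ} {β : ℤ} {w : Fin 3 → ℤ} (hV : onV α β w)
    (l : Fin 3) (h : |w l| ≤ 1) : inT α β w :=
  ⟨hV, Equiv.addRight l, Or.inl (by simpa using h)⟩

lemma inT_mono {α : Fin 3 → ℤ} {β : ℤ} {w w' : Fin 3 → ℤ} (hV : onV α β w)
    (hT : inT α β w') (hle : ∀ k, |w k| ≤ |w' k|) : inT α β w := by
  obtain ⟨_, σ, h | h⟩ := hT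
  · exact ⟨hV, σ, Or.inl ((hle _).trans h)⟩
  · refine ⟨hV, σ, Or.inr ?_⟩
    calc |w (σ 1) * w (σ 2)| = |w (σ 1)| * |w (σ 2)| := abs_mul _ _
      _ ≤ |w' (σ 1)| * |w' (σ 2)| :=
        mul_le_mul (hle _) (hle _) (abs_nonneg _) (abs_nonneg _)
      _ = |w' (σ 1) * w' (σ 2)| := (abs_mul _ _).symm
      _ ≤ _ := h

lemma chain (α : Fin 3 → ℤ) (β : ℤ) (N : ℕ) (z : ℕ → Fin 3 → ℤ)
    (honV : ∀ t, t ≤ N → onV α β (z t))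
    (hdist : ∀ s ≤ N, ∀ t ≤ N, s ≠ t → z s ≠ z t)
    (hstep : ∀ t < N, ∃ l : Fin 3, z (t + 1) = vAct α l (z t))
    (hN : inT α β (z N) ∨ ∃ i, |z N i| = 2) :
    ∀ d s, N - s ≤ d → s < N →
      ¬(inT α β (z s) ∨ ∃ i, |z s i| = 2) →
      ∀ l : Fin 3, z (s + 1) = vAct α l (z s) → |z s l| < |z (s + 1) l| → False := by
  intro d
  induction d with
  | zero => intro s h1 h2 _ _ _ _; omega
  | succ d ih =>
    intro s _ hsN hbad l hl hup
    have hbad' := hbad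
    push_neg at hbad'
    obtain ⟨hnT, hc2⟩ := hbad'
    have hVs := honV s (by omega)
    have hVs1 := honV (s + 1) (by omega)
    have hcoord : ∀ k, k ≠ l → z (s + 1) k = z s k := fun k hk => by
      rw [hl, vAct_ne _ _ _ _ hk]
    by_cases hb1 : inT α β (z (s + 1)) ∨ ∃ i, |z (s + 1) i| = 2
    · rcases hb1 with hT | ⟨i, hi⟩
      · have hle : ∀ k, |z s k| ≤ |z (s + 1) k| := by
          intro k
          by_cases hk : k = l
          · subst hk; exact le_of_lt hup
          · rw [hcoord k hk]
        exact hnT (inT_mono hVs hT hle)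
      · by_cases hil : i = l
        · subst hil
          refine hnT (inT_of_small hVs i ?_)
          have := abs_nonneg (z s i)
          omega
        · exact hc2 i (by rw [← hcoord i hil]; exact hi)
    · have hne : s + 1 ≠ N := by intro h; rw [h] at hb1; exact hb1 hN
      have hs1N : s + 1 < N := by omega
      obtain ⟨l', hl'⟩ := hstep (s + 1) hs1N
      have hll' : l' ≠ l := by
        intro h
        subst h
        have hzz : z (s + 1 + 1) = z s := by rw [hl', hl, vAct_invol]
        exact hdist s (by omega) (s + 1 + 1) (by omega) (by omega) hzz.symm
      have hb1' := hb1
      push_neg at hb1'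
      obtain ⟨hnT1, hc21⟩ := hb1'
      have hb := fun i => notT_bounds hVs1 hnT1 i
      have h3 : ∀ i, 3 ≤ |z (s + 1) i| := fun i => by
        have := (hb i).1; have := hc21 i; omega
      have hα3 : ∀ i, 3 * |α i| < |z (s + 1) (i + 1) * z (s + 1) (i + 2)| :=
        fun i => lt_of_le_of_lt (le_max_left _ _) (hb i).2
      have hback : vAct α l (z (s + 1)) = z s := by rw [hl, vAct_invol]
      have hdownl : |vAct α l (z (s + 1)) l| ≤ |z (s + 1) l| := by
        rw [hback]; exact le_of_lt hup
      have hupl' : |z (s + 1) l'| < |z (s + 1 + 1) l'| := by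
        by_contra hc
        push_neg at hc
        have hcl : |vAct α l' (z (s + 1)) l'| ≤ |z (s + 1) l'| := by rw [← hl']; exact hc
        exact no_two_down (z (s + 1)) h3 hα3 l l' (Ne.symm hll') hdownl hcl
      exact ih (s + 1) (by omega) hs1N hb1 l' hl' hupl'

/-- Every vertex on a path between two `Γ`-equivalent points of `𝔘` lies in
`𝔗` or has some coordinate of absolute value `2`. -/
theorem prop_3_1 (α : Fin 3 → ℤ) (β : ℤ) (x y : Fin 3 → ℤ)
    (hx : inU α β x) (hy : inU α β y) (hxy : gammaRel α x y)
    (N : ℕ) (z : ℕ → Fin 3 → ℤ) (hz0 : z 0 = x) (hzN : z N = y)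
    (hdist : ∀ s ≤ N, ∀ t ≤ N, s ≠ t → z s ≠ z t)
    (hstep : ∀ t < N, ∃ l : Fin 3, z (t + 1) = vAct α l (z t)) :
    ∀ t ≤ N, inT α β (z t) ∨ ∃ i : Fin 3, |z t i| = 2 := by
  obtain ⟨hxV, hxnT, σx, hx2, -, -⟩ := hx
  obtain ⟨hyV, hynT, σy, hy2, -, -⟩ := hy
  have honV : ∀ t, t ≤ N → onV α β (z t) := by
    intro t
    induction t with
    | zero => intro _; rw [hz0]; exact hxV
    | succ t iht =>
      intro ht
      obtain ⟨l, hl⟩ := hstep t (by omega)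
      rw [hl]
      exact onV_vAct (iht (by omega)) l
  have hNend : inT α β (z N) ∨ ∃ i, |z N i| = 2 := Or.inr ⟨σy 0, by rw [hzN]; exact hy2⟩
  have h0end : inT α β (z 0) ∨ ∃ i, |z 0 i| = 2 := Or.inr ⟨σx 0, by rw [hz0]; exact hx2⟩
  intro t ht
  by_cases ht0 : t = 0
  · rw [ht0]; exact h0end
  by_cases htN : t = N
  · rw [htN]; exact hNend
  by_contra hbad
  have hbad' := hbad
  push_neg at hbad'
  obtain ⟨hnT, hc2⟩ := hbad'
  have ht1 : 1 ≤ t := by omega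
  have htN' : t < N := by omega
  obtain ⟨l, hl⟩ := hstep t htN'
  obtain ⟨k, hk0⟩ := hstep (t - 1) (by omega)
  have et : t - 1 + 1 = t := by omega
  rw [et] at hk0
  have hk' : vAct α k (z t) = z (t - 1) := by rw [hk0, vAct_invol]
  have hkl : k ≠ l := by
    intro h
    subst h
    have : z (t + 1) = z (t - 1) := by rw [hl, hk']
    exact hdist (t + 1) (by omega) (t - 1) (by omega) (by omega) this
  have hVt := honV t ht
  have hb := fun i => notT_bounds hVt hnT i
  have h3 : ∀ i, 3 ≤ |z t i| := fun i => by
    have := (hb i).1; have := hc2 i; omega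
  have hα3 : ∀ i, 3 * |α i| < |z t (i + 1) * z t (i + 2)| :=
    fun i => lt_of_le_of_lt (le_max_left _ _) (hb i).2
  by_cases hdir : |vAct α l (z t) l| ≤ |z t l|
  · -- backward direction goes strictly up
    have hupk : |z t k| < |vAct α k (z t) k| := by
      by_contra hc
      push_neg at hc
      exact no_two_down (z t) h3 hα3 k l hkl hc hdir
    -- reversed path
    set w : ℕ → Fin 3 → ℤ := fun s => z (N - s) with hw
    have honVw : ∀ s, s ≤ N → onV α β (w s) := fun s _ => honV (N - s) (by omega)
    have hdistw : ∀ s ≤ N, ∀ u ≤ N, s ≠ u → w s ≠ w u := by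
      intro s hs u hu hsu
      exact hdist (N - s) (by omega) (N - u) (by omega) (by omega)
    have hstepw : ∀ s < N, ∃ m : Fin 3, w (s + 1) = vAct α m (w s) := by
      intro s hs
      obtain ⟨m, hm⟩ := hstep (N - s - 1) (by omega)
      have e1 : N - s - 1 + 1 = N - s := by omega
      rw [e1] at hm
      refine ⟨m, ?_⟩
      show z (N - (s + 1)) = vAct α m (z (N - s))
      have e2 : N - (s + 1) = N - s - 1 := by omega
      rw [e2, hm, vAct_invol]
    have hNw : inT α β (w N) ∨ ∃ i, |w N i| = 2 := by
      show inT α β (z (N - N)) ∨ ∃ i, |z (N - N) i| = 2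
      rw [Nat.sub_self]
      exact h0end
    have ew1 : N - (N - t) = t := by omega
    have ew2 : N - (N - t + 1) = t - 1 := by omega
    refine chain α β N w honVw hdistw hstepw hNw N (N - t) (by omega) (by omega) ?_ k ?_ ?_
    · show ¬(inT α β (z (N - (N - t))) ∨ ∃ i, |z (N - (N - t)) i| = 2)
      rw [ew1]
      exact hbad
    · show z (N - (N - t + 1)) = vAct α k (z (N - (N - t)))
      rw [ew1, ew2, hk']
    · show |z (N - (N - t)) k| < |z (N - (N - t + 1)) k|
      rw [ew1, ew2, ← hk']
      exact hupk
  · -- forward direction goes strictly up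
    have hup : |z t l| < |z (t + 1) l| := by
      push_neg at hdir
      rw [hl]
      exact hdir
    exact chain α β N z honV hdist hstep hNend N t (by omega) htN' hbad l hl hup
end
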